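/- Let K ⊆ W be a proper cone and let C' ⊆ V' be a retract of a proper cone C ⊆ V, i.e., there exist a (C',C)-positive map R : V' → V and a (C,C')-positive map S : V → V' with S ∘ R = id_{V'}. If the pair (C,K) is resilient, then the pair (C',K) is resilient; if the pair (K,C) is resilient, then the pair (K,C') is resilient. In particular, if C is resilient, then C' is resilient. -/
import Mathlib


open scoped TensorProduct
open Set

noncomputable section

/-- The dual cone of a set `C`, inside the algebraic dual space. -/
def dualConeSet {V : Type*} [AddCommGroup V] [Module ℝ V] (C : Set V) :
    Set (Module.Dual ℝ V) := {φ | ∀ x ∈ C, 0 ≤ φ x}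

/-- A proper cone: a closed convex cone which is generating (`C - C = V`) and
pointed (`C ∩ (-C) = {0}`). -/
def IsProperCone {V : Type*} [NormedAddCommGroup V] [NormedSpace ℝ V] (C : Set V) : Prop :=
  IsClosed C ∧ Convex ℝ C ∧ (∀ ⦃c : ℝ⦄, 0 < c → ∀ ⦃x⦄, x ∈ C → c • x ∈ C) ∧
    (∀ v : V, ∃ x ∈ C, ∃ y ∈ C, v = x - y) ∧ C ∩ (-C) = {0}

/-- `(C₁,C₂)`-entanglement breaking maps. -/
def IsEntanglementBreaking {V₁ V₂ : Type*} [AddCommGroup V₁] [Module ℝ V₁]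
    [AddCommGroup V₂] [Module ℝ V₂] (C₁ : Set V₁) (C₂ : Set V₂) (P : V₁ →ₗ[ℝ] V₂) : Prop :=
  ∃ (m : ℕ) (φ : Fin m → Module.Dual ℝ V₁) (x : Fin m → V₂),
    (∀ i, φ i ∈ dualConeSet C₁) ∧ (∀ i, x i ∈ C₂) ∧ ∀ v, P v = ∑ i, φ i v • x i

/-- The `k`-fold minimal tensor power of a cone. -/
def minTensorPow {V : Type*} [AddCommGroup V] [Module ℝ V] (C : Set V) (k : ℕ) :
    Set (⨂[ℝ] _ : Fin k, V) :=
  convexHull ℝ {z | ∃ x : Fin k → V, (∀ i, x i ∈ C) ∧ z = PiTensorProduct.tprod ℝ x}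

/-- The functional on the `k`-fold tensor power induced by a family of functionals,
`x₁ ⊗ ⋯ ⊗ x_k ↦ ∏ i, φ i (x i)`. -/
def dualPairing {V : Type*} [AddCommGroup V] [Module ℝ V] {k : ℕ}
    (φ : Fin k → Module.Dual ℝ V) : (⨂[ℝ] _ : Fin k, V) →ₗ[ℝ] ℝ :=
  PiTensorProduct.lift ((MultilinearMap.mkPiAlgebra ℝ (Fin k) ℝ).compLinearMap φ)

/-- The `k`-fold maximal tensor power of a cone: the dual of the minimal tensor power of
the dual cone, under the canonical identification of `(V^{⊗k})*` with `(V*)^{⊗k}`. -/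
def maxTensorPow {V : Type*} [AddCommGroup V] [Module ℝ V] (C : Set V) (k : ℕ) :
    Set (⨂[ℝ] _ : Fin k, V) :=
  {z | ∀ φ : Fin k → Module.Dual ℝ V, (∀ i, φ i ∈ dualConeSet C) → 0 ≤ dualPairing φ z}

/-- `(C₁,C₂)`-entanglement annihilating maps: `P^{⊗k}` maps the `k`-fold maximal tensor power
of `C₁` into the `k`-fold minimal tensor power of `C₂`, for every `k ≥ 1`. -/
def IsEntanglementAnnihilating {V₁ V₂ : Type*} [AddCommGroup V₁] [Module ℝ V₁]
    [AddCommGroup V₂] [Module ℝ V₂] (C₁ : Set V₁) (C₂ : Set V₂) (P : V₁ →ₗ[ℝ] V₂) : Prop :=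
  ∀ k : ℕ, 1 ≤ k →
    Set.MapsTo (⇑(PiTensorProduct.map fun _ : Fin k => P))
      (maxTensorPow C₁ k) (minTensorPow C₂ k)

/-- A pair of cones is resilient if every entanglement annihilating map between them is
entanglement breaking. -/
def IsResilientPair {V₁ V₂ : Type*} [AddCommGroup V₁] [Module ℝ V₁]
    [AddCommGroup V₂] [Module ℝ V₂] (C₁ : Set V₁) (C₂ : Set V₂) : Prop :=
  ∀ P : V₁ →ₗ[ℝ] V₂, IsEntanglementAnnihilating C₁ C₂ P → IsEntanglementBreaking C₁ C₂ P

/-- The minimal tensor product of two cones. -/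
def minTensor {V W : Type*} [AddCommGroup V] [Module ℝ V] [AddCommGroup W] [Module ℝ W]
    (C : Set V) (D : Set W) : Set (V ⊗[ℝ] W) :=
  convexHull ℝ {z | ∃ x ∈ C, ∃ y ∈ D, z = x ⊗ₜ[ℝ] y}

/-- The maximal tensor product of two cones: the dual of the minimal tensor product of the
dual cones, under the canonical identification of `(V ⊗ W)*` with `V* ⊗ W*`. -/
def maxTensor {V W : Type*} [AddCommGroup V] [Module ℝ V] [AddCommGroup W] [Module ℝ W]
    (C : Set V) (D : Set W) : Set (V ⊗[ℝ] W) :=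
  {z | ∀ φ ∈ dualConeSet C, ∀ ψ ∈ dualConeSet D,
      0 ≤ TensorProduct.dualDistrib ℝ V W (φ ⊗ₜ[ℝ] ψ) z}

/-- The Lorentz cone `L_n ⊆ ℝ ⊕ ℝⁿ`. -/
def lorentzCone (n : ℕ) : Set (ℝ × EuclideanSpace ℝ (Fin n)) := {p | ‖p.2‖ ≤ p.1}



lemma dualPairing_comp_map {V V' : Type*} [AddCommGroup V] [Module ℝ V]
    [AddCommGroup V'] [Module ℝ V'] {k : ℕ} (T : V →ₗ[ℝ] V')
    (φ : Fin k → Module.Dual ℝ V') :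
    (dualPairing φ) ∘ₗ (PiTensorProduct.map fun _ : Fin k => T)
      = dualPairing (fun i => (φ i) ∘ₗ T) := by
  apply PiTensorProduct.ext
  ext x
  simp [dualPairing]

lemma max_mapsTo {V V' : Type*} [AddCommGroup V] [Module ℝ V]
    [AddCommGroup V'] [Module ℝ V'] {C : Set V} {C' : Set V'} (T : V →ₗ[ℝ] V')
    (hT : Set.MapsTo (⇑T) C C') (k : ℕ) :
    Set.MapsTo (⇑(PiTensorProduct.map fun _ : Fin k => T))
      (maxTensorPow C k) (maxTensorPow C' k) := by
  intro z hz φ hφ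
  have := DFunLike.congr_fun (dualPairing_comp_map T φ) z
  simp only [LinearMap.comp_apply] at this
  rw [this]
  exact hz _ fun i x hx => hφ i _ (hT hx)

lemma min_mapsTo {V V' : Type*} [AddCommGroup V] [Module ℝ V]
    [AddCommGroup V'] [Module ℝ V'] {C : Set V} {C' : Set V'} (T : V →ₗ[ℝ] V')
    (hT : Set.MapsTo (⇑T) C C') (k : ℕ) :
    Set.MapsTo (⇑(PiTensorProduct.map fun _ : Fin k => T))
      (minTensorPow C k) (minTensorPow C' k) := by
  intro z hz
  have him : (PiTensorProduct.map fun _ : Fin k => T) ''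
      {z | ∃ x : Fin k → V, (∀ i, x i ∈ C) ∧ z = PiTensorProduct.tprod ℝ x}
      ⊆ {z | ∃ x : Fin k → V', (∀ i, x i ∈ C') ∧ z = PiTensorProduct.tprod ℝ x} := by
    rintro _ ⟨_, ⟨x, hx, rfl⟩, rfl⟩
    exact ⟨fun i => T (x i), fun i => hT (hx i), by simp⟩
  have : (PiTensorProduct.map fun _ : Fin k => T) z ∈
      convexHull ℝ ((PiTensorProduct.map fun _ : Fin k => T) ''
        {z | ∃ x : Fin k → V, (∀ i, x i ∈ C) ∧ z = PiTensorProduct.tprod ℝ x}) := by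
    rw [← LinearMap.image_convexHull]
    exact Set.mem_image_of_mem _ hz
  exact convexHull_mono him this

lemma mapPow_comp {V₁ V₂ V₃ : Type*} [AddCommGroup V₁] [Module ℝ V₁]
    [AddCommGroup V₂] [Module ℝ V₂] [AddCommGroup V₃] [Module ℝ V₃]
    (f : V₁ →ₗ[ℝ] V₂) (g : V₂ →ₗ[ℝ] V₃) (k : ℕ) :
    (PiTensorProduct.map fun _ : Fin k => g ∘ₗ f)
      = (PiTensorProduct.map fun _ : Fin k => g) ∘ₗ
        (PiTensorProduct.map fun _ : Fin k => f) :=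
  PiTensorProduct.map_comp _ _

/-- **Lemma (resilience is closed under retracts).** -/
theorem resilience_closed_under_retracts
    {W V V' : Type*}
    [NormedAddCommGroup W] [NormedSpace ℝ W] [FiniteDimensional ℝ W]
    [NormedAddCommGroup V] [NormedSpace ℝ V] [FiniteDimensional ℝ V]
    [NormedAddCommGroup V'] [NormedSpace ℝ V'] [FiniteDimensional ℝ V']
    (K : Set W) (C : Set V) (C' : Set V')
    (hK : IsProperCone K) (hC : IsProperCone C) (hC' : IsProperCone C')
    (R : V' →ₗ[ℝ] V) (S : V →ₗ[ℝ] V')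
    (hR : Set.MapsTo (⇑R) C' C) (hS : Set.MapsTo (⇑S) C C')
    (hSR : S ∘ₗ R = LinearMap.id) :
    (IsResilientPair C K → IsResilientPair C' K) ∧
    (IsResilientPair K C → IsResilientPair K C') ∧
    (IsResilientPair C C → IsResilientPair C' C') := by
  have hid : ∀ v : V', S (R v) = v := fun v => DFunLike.congr_fun hSR v
  refine ⟨?_, ?_, ?_⟩
  · intro h P hP
    have hEA : IsEntanglementAnnihilating C K (P ∘ₗ S) := by
      intro k hk
      rw [mapPow_comp, LinearMap.coe_comp]
      exact (hP k hk).comp (max_mapsTo S hS k)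
    obtain ⟨m, φ, x, hφ, hx, hsum⟩ := h _ hEA
    refine ⟨m, fun i => (φ i) ∘ₗ R, x, fun i v hv => hφ i _ (hR hv), hx, fun v => ?_⟩
    have := hsum (R v)
    simpa [hid v] using this
  · intro h P hP
    have hEA : IsEntanglementAnnihilating K C (R ∘ₗ P) := by
      intro k hk
      rw [mapPow_comp, LinearMap.coe_comp]
      exact (min_mapsTo R hR k).comp (hP k hk)
    obtain ⟨m, φ, x, hφ, hx, hsum⟩ := h _ hEA
    refine ⟨m, φ, fun i => S (x i), hφ, fun i => hS (hx i), fun v => ?_⟩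
    have h1 : P v = S (R (P v)) := (hid (P v)).symm
    have := hsum v
    simp only [LinearMap.comp_apply] at this
    rw [h1, this, map_sum]
    simp
  · intro h P hP
    have hEA : IsEntanglementAnnihilating C C (R ∘ₗ P ∘ₗ S) := by
      intro k hk
      rw [mapPow_comp (P ∘ₗ S) R, mapPow_comp S P, LinearMap.coe_comp, LinearMap.coe_comp]
      exact ((min_mapsTo R hR k).comp (hP k hk)).comp (max_mapsTo S hS k)
    obtain ⟨m, φ, x, hφ, hx, hsum⟩ := h _ hEA
    refine ⟨m, fun i => (φ i) ∘ₗ R, fun i => S (x i),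
      fun i v hv => hφ i _ (hR hv), fun i => hS (hx i), fun v => ?_⟩
    have := hsum (R v)
    simp only [LinearMap.comp_apply, hid] at this
    have h1 : P v = S (R (P v)) := (hid (P v)).symm
    rw [h1, this, map_sum]
    simp

end
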